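/- arXiv:math/0411547 — 3 statements merged into one kernel-verified Lean document; each statement's English description precedes it below -/
import Mathlib

section
/- The three quaternions 1 + 2i, 1 + 2j and 1 + 2k freely generate a free subgroup of rank 3 of the group of units of ℍ(ℚ): the homomorphism from the free group on three generators to the units of ℍ(ℚ) sending the generators to 1 + 2i, 1 + 2j and 1 + 2k is injective. -/
/-!
Write `x_a = 1 + 2 e_a`, so that `normSq x_a = 5` and `x_a⁻¹ = star x_a / 5`. If a reduced word
with `m` inverse letters maps to `1`, replacing each `x_a⁻¹` by `star x_a` yields a product `W`
of Lipschitz quaternions with `W = 5 ^ m`. Modulo 5 every letter `ℓ` is isotropic, while for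
adjacent letters `ℓ ℓ'` of a reduced word `2 Re (ℓ ℓ')` is a unit; this lets one cancel the
leftmost letter from `W ≡ 0`, so `W ≢ 0 (mod 5)`. Hence `m = 0`, and `normSq W = 5 ^ length = 1`
forces the word to be empty.
-/

open Quaternion

namespace RingHom

variable {R S : Type*} [CommRing R] [CommRing S]

def mapQuaternion (f : R →+* S) : ℍ[R] →+* ℍ[S] where
  toFun q := ⟨f q.re, f q.imI, f q.imJ, f q.imK⟩
  map_one' := by ext <;> simp
  map_zero' := by ext <;> simp
  -- The `show`s retype the anonymous constructors as `ℍ[S]`, where the `Quaternion` simp set applies.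
  map_add' p q := by
    show (⟨_, _, _, _⟩ : ℍ[S]) = (⟨_, _, _, _⟩ : ℍ[S]) + ⟨_, _, _, _⟩
    ext <;> simp
  map_mul' p q := by
    show (⟨_, _, _, _⟩ : ℍ[S]) = (⟨_, _, _, _⟩ : ℍ[S]) * ⟨_, _, _, _⟩
    ext <;> simp <;> ring

variable (f : R →+* S) (q : ℍ[R])

@[simp] lemma re_mapQuaternion : (f.mapQuaternion q).re = f q.re := rfl
@[simp] lemma imI_mapQuaternion : (f.mapQuaternion q).imI = f q.imI := rfl
@[simp] lemma imJ_mapQuaternion : (f.mapQuaternion q).imJ = f q.imJ := rfl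
@[simp] lemma imK_mapQuaternion : (f.mapQuaternion q).imK = f q.imK := rfl

lemma mapQuaternion_star : f.mapQuaternion (star q) = star (f.mapQuaternion q) := by
  ext <;> simp

variable {f} in
lemma mapQuaternion_injective (hf : Function.Injective f) :
    Function.Injective f.mapQuaternion := fun p q h => by
  ext
  exacts [hf congr(($h).re), hf congr(($h).imI), hf congr(($h).imJ), hf congr(($h).imK)]

end RingHom

namespace Quaternion

variable {R : Type*} [CommRing R]

theorem mul_eq_zero_of_mul_mul_eq_zero {a b z : ℍ[R]} (hb : normSq b = 0)
    (hab : IsUnit (2 * (a * b).re)) (h : a * (b * z) = 0) : b * z = 0 := by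
  -- `2 Re (a b) = a b + star (a b)` is central.
  have htrace : (2 * (a * b).re) • (b * z) = b * (a * (b * z)) + b * star b * star a * z := by
    rw [← coe_mul_eq_smul, ← mul_assoc, coe_commutes, ← self_add_star', star_mul]
    noncomm_ring
  rw [h, self_mul_star, hb, mul_zero, coe_zero, zero_mul, zero_mul, add_zero] at htrace
  exact hab.smul_eq_zero.1 htrace

end Quaternion

namespace OneAddTwoIJK

instance : Fact (Nat.Prime 5) := ⟨Nat.prime_five⟩

variable (R : Type*) [CommRing R]

def gen : Fin 3 → ℍ[R] := ![⟨1, 2, 0, 0⟩, ⟨1, 0, 2, 0⟩, ⟨1, 0, 0, 2⟩]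

def letter (x : Fin 3 × Bool) : ℍ[R] := cond x.2 (gen R x.1) (star (gen R x.1))

def wordProd (L : List (Fin 3 × Bool)) : ℍ[R] := (L.map (letter R)).prod

variable {R}

@[simp] lemma wordProd_nil : wordProd R [] = 1 := rfl
@[simp] lemma wordProd_cons (x : Fin 3 × Bool) (L : List (Fin 3 × Bool)) :
    wordProd R (x :: L) = letter R x * wordProd R L :=
  List.prod_cons

lemma re_letter (x : Fin 3 × Bool) : (letter R x).re = 1 := by
  obtain ⟨a, _ | _⟩ := x <;> simp only [letter, cond_false, cond_true, re_star] <;>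
    fin_cases a <;> rfl

lemma letter_ne_zero [Nontrivial R] (x : Fin 3 × Bool) : letter R x ≠ 0 := fun h =>
  one_ne_zero (α := R) (by simpa [h] using re_letter (R := R) x)

lemma normSq_gen (a : Fin 3) : normSq (gen R a) = 5 := by
  rw [normSq_def']
  fin_cases a <;> simp [gen] <;> norm_num

lemma normSq_letter (x : Fin 3 × Bool) : normSq (letter R x) = 5 := by
  obtain ⟨a, _ | _⟩ := x <;> simp [letter, normSq_gen]

lemma normSq_wordProd (L : List (Fin 3 × Bool)) : normSq (wordProd R L) = 5 ^ L.length := by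
  simp [wordProd, map_list_prod, Function.comp_def, normSq_letter]

variable {S : Type*} [CommRing S]

lemma mapQuaternion_gen (f : R →+* S) (a : Fin 3) : f.mapQuaternion (gen R a) = gen S a := by
  ext <;> simp only [RingHom.re_mapQuaternion, RingHom.imI_mapQuaternion,
    RingHom.imJ_mapQuaternion, RingHom.imK_mapQuaternion] <;> fin_cases a <;> simp [gen, map_ofNat]

lemma mapQuaternion_wordProd (f : R →+* S) (L : List (Fin 3 × Bool)) :
    f.mapQuaternion (wordProd R L) = wordProd S L := by
  have : ∀ x, f.mapQuaternion (letter R x) = letter S x := by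
    rintro ⟨a, _ | _⟩ <;> simp [letter, f.mapQuaternion_star, mapQuaternion_gen]
  simp [wordProd, map_list_prod, Function.comp_def, this]

lemma isUnit_two_mul_re_letter_mul_letter {x y : Fin 3 × Bool} (h : x.1 = y.1 → x.2 = y.2) :
    IsUnit (2 * (letter (ZMod 5) x * letter (ZMod 5) y).re) := by
  revert x y; decide

lemma wordProd_ne_zero_of_isReduced :
    ∀ {L : List (Fin 3 × Bool)}, FreeGroup.IsReduced L → wordProd (ZMod 5) L ≠ 0
  | [], _ => one_ne_zero
  | [x], _ => by simpa using letter_ne_zero x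
  | x :: y :: L, hL => by
    rw [FreeGroup.isReduced_cons_cons] at hL
    intro h
    apply wordProd_ne_zero_of_isReduced hL.2
    rw [wordProd_cons] at h ⊢
    -- `normSq_letter` says `= 5`, which is `0` in `ZMod 5` by `rfl`.
    have hy : normSq (letter (ZMod 5) y) = 0 := normSq_letter y
    exact mul_eq_zero_of_mul_mul_eq_zero hy (isUnit_two_mul_re_letter_mul_letter hL.1) h

/-- Over `ℚ` the conjugate letter is `5` times the inverse generator. -/
lemma wordProd_eq_smul_lift (F : Fin 3 → ℍ[ℚ]ˣ) (hF : ∀ a, (F a : ℍ[ℚ]) = gen ℚ a)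
    (L : List (Fin 3 × Bool)) :
    wordProd ℚ L =
      (5 : ℚ) ^ L.countP (fun x => !x.2) • (FreeGroup.lift F (FreeGroup.mk L) : ℍ[ℚ]) := by
  have hinv (a : Fin 3) : star (gen ℚ a) = (5 : ℚ) • (((F a)⁻¹ : ℍ[ℚ]ˣ) : ℍ[ℚ]) := by
    rw [Units.val_inv_eq_inv_val, hF, inv_def, normSq_gen, smul_smul]
    norm_num
  induction L with
  | nil => simp
  | cons x L ih =>
    obtain ⟨a, _ | _⟩ := x
    · simp [FreeGroup.lift_mk, letter, hinv, ih, pow_succ, smul_smul]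
    · simp [FreeGroup.lift_mk, letter, hF, ih]

lemma wordProd_int_toWord_of_lift_eq_one {F : Fin 3 → ℍ[ℚ]ˣ} (hF : ∀ a, (F a : ℍ[ℚ]) = gen ℚ a)
    {w : FreeGroup (Fin 3)} (hw : FreeGroup.lift F w = 1) :
    wordProd ℤ w.toWord = 5 ^ w.toWord.countP (fun x => !x.2) := by
  apply (Int.castRingHom ℚ).mapQuaternion_injective Int.cast_injective
  rw [mapQuaternion_wordProd, map_pow, map_ofNat, wordProd_eq_smul_lift F hF,
    FreeGroup.mk_toWord, hw]
  simp

theorem lift_injective {F : Fin 3 → ℍ[ℚ]ˣ} (hF : ∀ a, (F a : ℍ[ℚ]) = gen ℚ a) :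
    Function.Injective (FreeGroup.lift F) := by
  refine (injective_iff_map_eq_one _).2 fun w hw => ?_
  have hℤ := wordProd_int_toWord_of_lift_eq_one hF hw
  have hm : w.toWord.countP (fun x => !x.2) = 0 := by
    have h5 := wordProd_ne_zero_of_isReduced (FreeGroup.isReduced_toWord (x := w))
    rw [← mapQuaternion_wordProd (Int.castRingHom (ZMod 5)), hℤ, map_pow, map_ofNat] at h5
    have h50 : (5 : ℍ[ZMod 5]) = 0 := by ext <;> simp <;> decide
    by_contra hm
    exact h5 (by rw [h50, zero_pow hm])
  have hlen : (5 : ℤ) ^ w.toWord.length = 5 ^ 0 := by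
    rw [← normSq_wordProd, hℤ, hm]; simp
  rw [← FreeGroup.toWord_eq_nil_iff, ← List.length_eq_zero_iff]
  exact Nat.pow_right_injective (by norm_num : 2 ≤ 5) (by exact_mod_cast hlen)

end OneAddTwoIJK

/-- The quaternions `1 + 2i`, `1 + 2j` and `1 + 2k` freely
generate a free subgroup of rank 3 of the units of `ℍ(ℚ)`. -/
theorem one_add_two_i_j_k_free :
    Function.Injective
      (FreeGroup.lift
        (![Units.mk0 (⟨1, 2, 0, 0⟩ : Quaternion ℚ)
            (fun h => one_ne_zero (α := ℚ) (congrArg QuaternionAlgebra.re h)),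
           Units.mk0 (⟨1, 0, 2, 0⟩ : Quaternion ℚ)
            (fun h => one_ne_zero (α := ℚ) (congrArg QuaternionAlgebra.re h)),
           Units.mk0 (⟨1, 0, 0, 2⟩ : Quaternion ℚ)
            (fun h => one_ne_zero (α := ℚ) (congrArg QuaternionAlgebra.re h))] :
          Fin 3 → (Quaternion ℚ)ˣ)) :=
  OneAddTwoIJK.lift_injective fun a => by fin_cases a <;> rfl
end

section
/- The three rational rotation matrices [[1, 0, 0], [0, −3/5, −4/5], [0, 4/5, −3/5]], [[−3/5, 0, 4/5], [0, 1, 0], [−4/5, 0, −3/5]] and [[−3/5, −4/5, 0], [4/5, −3/5, 0], [0, 0, 1]] freely generate a free subgroup of rank 3 of SO₃(ℚ): the homomorphism from the free group on three generators to the group of invertible 3×3 rational matrices sending the generators to these three matrices is injective. -/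
/-!
Five times each generator, and five times its inverse (the transpose), is an integer matrix
whose reduction mod 5 has rank one, `u vᵀ`. Along a reduced word `x₁ ⋯ x_k` the product of
these rank-one matrices telescopes to `(∏ v(xᵢ) ⬝ᵥ u(xᵢ₊₁)) • u(x₁) v(x_k)ᵀ`, and the inner
products are nonzero mod 5 except between a letter and its inverse, so the product is nonzero
mod 5. If the word mapped to `1`, the integer product would be `5 ^ k • 1 ≡ 0`.
-/

namespace FreeGroup

variable {α G : Type*} [DecidableEq α] [Group G]

theorem injective_lift_of_prod_ne_one (f : α → G)
    (h : ∀ L : List (α × Bool), IsReduced L → L ≠ [] →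
      (L.map fun x => cond x.2 (f x.1) (f x.1)⁻¹).prod ≠ 1) :
    Function.Injective (lift f) := by
  rw [injective_iff_map_eq_one]
  intro w hw
  by_contra hw₁
  refine h w.toWord isReduced_toWord (toWord_eq_nil_iff.not.mpr hw₁) ?_
  rw [← lift_mk, mk_toWord, hw]

end FreeGroup

namespace Matrix

theorem exists_prod_map_vecMulVec_eq {ι n R : Type*} [Fintype n] [DecidableEq n]
    [CommRing R] [NoZeroDivisors R] (u v : ι → n → R) (hv : ∀ i, v i ≠ 0) :
    ∀ (i : ι) (L : List ι), (i :: L).IsChain (fun i j => v i ⬝ᵥ u j ≠ 0) →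
      ∃ w ≠ 0, ((i :: L).map fun j => vecMulVec (u j) (v j)).prod = vecMulVec (u i) w
  | i, [], _ => ⟨v i, hv i, by simp⟩
  | i, j :: L, hL => by
    rw [List.isChain_cons_cons] at hL
    obtain ⟨w, hw, hprod⟩ := exists_prod_map_vecMulVec_eq u v hv j L hL.2
    refine ⟨(v i ⬝ᵥ u j) • w, smul_ne_zero hL.1 hw, ?_⟩
    rw [List.map_cons, List.prod_cons, hprod, vecMulVec_mul_vecMulVec]

variable {ι n : Type*} [Fintype n] [DecidableEq n]

theorem pow_smul_prod_eq_map_prod {q : ℚ} {g : ι → Matrix n n ℚ} {N : ι → Matrix n n ℤ}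
    (hgN : ∀ i, q • g i = (N i).map (↑)) :
    ∀ L : List ι, q ^ L.length • (L.map g).prod = ((L.map N).prod).map (↑)
  | [] => by simp
  | i :: L => by
    rw [List.map_cons, List.prod_cons, List.length_cons, pow_succ', ← smul_mul_smul_comm,
      hgN, pow_smul_prod_eq_map_prod hgN L, List.map_cons, List.prod_cons]
    exact (Matrix.map_mul (f := Int.castRingHom ℚ)).symm

theorem prod_map_intCast_eq_zero_of_prod_eq_one {q : ℕ} {g : ι → Matrix n n ℚ}
    {N : ι → Matrix n n ℤ} (hgN : ∀ i, (q : ℚ) • g i = (N i).map (↑)) {L : List ι}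
    (hL : L ≠ []) (h : (L.map g).prod = 1) :
    (L.map fun i => (N i).map (Int.cast : ℤ → ZMod q)).prod = 0 := by
  have hprodN : (L.map N).prod = ((q ^ L.length : ℕ) : Matrix n n ℤ) := by
    refine Matrix.map_injective (f := (Int.cast : ℤ → ℚ)) Int.cast_injective ?_
    dsimp only
    rw [← pow_smul_prod_eq_map_prod hgN, h, ← Nat.cast_pow, Nat.cast_smul_eq_nsmul, nsmul_one,
      Matrix.map_natCast Int.cast_zero, Int.cast_natCast, diagonal_natCast]
  have hmap := map_list_prod (Int.castRingHom (ZMod q)).mapMatrix (L.map N)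
  simp only [RingHom.mapMatrix_apply, Int.coe_castRingHom, List.map_map, Function.comp_def] at hmap
  rw [← hmap, hprodN, Matrix.map_natCast Int.cast_zero, Int.cast_natCast, Nat.cast_pow,
    ZMod.natCast_self, zero_pow (by simpa using hL), diagonal_zero]

theorem GeneralLinearGroup.smul_coe_cond_eq_map {α : Type*} {q : ℚ} (f : α → GL n ℚ)
    (N : α → Matrix n n ℤ) (horth : ∀ a, (f a : Matrix n n ℚ)ᵀ * f a = 1)
    (hN : ∀ a, q • (f a : Matrix n n ℚ) = (N a).map (↑)) (x : α × Bool) :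
    q • ((cond x.2 (f x.1) (f x.1)⁻¹ : GL n ℚ) : Matrix n n ℚ) =
      (cond x.2 (N x.1) (N x.1)ᵀ).map (↑) := by
  obtain ⟨a, _ | _⟩ := x
  · rw [cond_false, cond_false, coe_units_inv, inv_eq_left_inv (horth a), ← transpose_smul, hN,
      transpose_map]
  · exact hN a

end Matrix

open Matrix in
theorem FreeGroup.injective_lift_of_map_zmod_rankOne {α n : Type*} [DecidableEq α] [Fintype n]
    [DecidableEq n] {q : ℕ} (hq : q.Prime) (f : α → GL n ℚ) (N : α × Bool → Matrix n n ℤ)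
    (u v : α × Bool → n → ZMod q)
    (hN : ∀ x, (q : ℚ) • ((cond x.2 (f x.1) (f x.1)⁻¹ : GL n ℚ) : Matrix n n ℚ) = (N x).map (↑))
    (huv : ∀ x, (N x).map (Int.cast : ℤ → ZMod q) = vecMulVec (u x) (v x))
    (hu : ∀ x, u x ≠ 0) (hv : ∀ x, v x ≠ 0)
    (hvu : ∀ x y : α × Bool, (x.1 = y.1 → x.2 = y.2) → v x ⬝ᵥ u y ≠ 0) :
    Function.Injective (lift f) := by
  have := Fact.mk hq
  refine injective_lift_of_prod_ne_one f fun L hL hL₀ h1 => ?_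
  obtain ⟨x, L, rfl⟩ := List.exists_cons_of_ne_nil hL₀
  obtain ⟨w, hw, hprod⟩ := exists_prod_map_vecMulVec_eq u v hv x L (hL.imp fun x y => hvu x y)
  have h1' := congrArg (Units.coeHom (Matrix n n ℚ)) h1
  rw [map_list_prod, List.map_map, MonoidHom.map_one] at h1'
  have h0 := prod_map_intCast_eq_zero_of_prod_eq_one hN hL₀ h1'
  simp only [huv] at h0
  exact vecMulVec_ne_zero (hu x) hw (hprod ▸ h0)

def rotationNumerator : Fin 3 → Matrix (Fin 3) (Fin 3) ℤ :=
  ![!![5, 0, 0; 0, -3, -4; 0, 4, -3], !![-3, 0, 4; 0, 5, 0; -4, 0, -3],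
    !![-3, -4, 0; 4, -3, 0; 0, 0, 5]]

def rotationColumn : Fin 3 → Fin 3 → ZMod 5 := ![![0, 1, 2], ![1, 0, 3], ![1, 2, 0]]

def rotationRow : Fin 3 → Fin 3 → ZMod 5 := ![![0, 2, 1], ![2, 0, 4], ![2, 1, 0]]

def letterColumn (x : Fin 3 × Bool) : Fin 3 → ZMod 5 :=
  cond x.2 (rotationColumn x.1) (rotationRow x.1)

def letterRow (x : Fin 3 × Bool) : Fin 3 → ZMod 5 :=
  cond x.2 (rotationRow x.1) (rotationColumn x.1)

open Matrix in
theorem map_letterNumerator_eq_vecMulVec (x : Fin 3 × Bool) :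
    (cond x.2 (rotationNumerator x.1) (rotationNumerator x.1)ᵀ).map (Int.cast : ℤ → ZMod 5) =
      vecMulVec (letterColumn x) (letterRow x) := by
  revert x
  decide

theorem letterColumn_ne_zero (x : Fin 3 × Bool) : letterColumn x ≠ 0 := by
  revert x
  decide

theorem letterRow_ne_zero (x : Fin 3 × Bool) : letterRow x ≠ 0 := by
  revert x
  decide

theorem letterRow_dotProduct_letterColumn_ne_zero (x y : Fin 3 × Bool)
    (h : x.1 = y.1 → x.2 = y.2) : letterRow x ⬝ᵥ letterColumn y ≠ 0 := by
  revert x y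
  decide

/-- The three rational rotation matrices
`[[1, 0, 0], [0, −3/5, −4/5], [0, 4/5, −3/5]]`,
`[[−3/5, 0, 4/5], [0, 1, 0], [−4/5, 0, −3/5]]` and
`[[−3/5, −4/5, 0], [4/5, −3/5, 0], [0, 0, 1]]` freely generate a free
subgroup of rank 3 of the group of invertible 3×3 rational matrices. -/
theorem three_rational_rotations_free :
    Function.Injective
      (FreeGroup.lift
        (![Matrix.GeneralLinearGroup.mkOfDetNeZero
            (!![(1 : ℚ), 0, 0;
                (0 : ℚ), (-3 : ℚ)/5, (-4 : ℚ)/5;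
                (0 : ℚ), (4 : ℚ)/5, (-3 : ℚ)/5])
            (by norm_num [Matrix.det_fin_three, Matrix.vecHead, Matrix.vecTail, Matrix.cons_val_two]),
           Matrix.GeneralLinearGroup.mkOfDetNeZero
            (!![(-3 : ℚ)/5, 0, 4/5;
                (0 : ℚ), 1, 0;
                (-4 : ℚ)/5, 0, (-3 : ℚ)/5])
            (by norm_num [Matrix.det_fin_three, Matrix.vecHead, Matrix.vecTail, Matrix.cons_val_two]),
           Matrix.GeneralLinearGroup.mkOfDetNeZero
            (!![(-3 : ℚ)/5, (-4 : ℚ)/5, 0;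
                (4 : ℚ)/5, (-3 : ℚ)/5, 0;
                (0 : ℚ), 0, 1])
            (by norm_num [Matrix.det_fin_three, Matrix.vecHead, Matrix.vecTail, Matrix.cons_val_two])] :
          Fin 3 → GL (Fin 3) ℚ)) := by
  refine FreeGroup.injective_lift_of_map_zmod_rankOne Nat.prime_five _ _ letterColumn letterRow
    (Matrix.GeneralLinearGroup.smul_coe_cond_eq_map _ rotationNumerator ?orthogonal ?scaled)
    map_letterNumerator_eq_vecMulVec letterColumn_ne_zero letterRow_ne_zero
    letterRow_dotProduct_letterColumn_ne_zero
  all_goals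
    intro a
    fin_cases a <;> ext i j <;> fin_cases i <;> fin_cases j <;>
      norm_num [rotationNumerator, Matrix.mul_apply, Fin.sum_univ_three, Matrix.cons_val_two]
end

section
/- Let t ≥ 2 and let x⁽¹⁾, …, x⁽ᵗ⁾ be nonzero quaternions in ℍ(ℚ). For each nonzero x = x₀ + x₁i + x₂j + x₃k ∈ ℍ(ℚ) let ϑ(x) be the 3×3 rational matrix (1/|x|²)·[[x₀² + x₁² − x₂² − x₃², 2(x₁x₂ − x₀x₃), 2(x₁x₃ + x₀x₂)], [2(x₁x₂ + x₀x₃), x₀² − x₁² + x₂² − x₃², 2(x₂x₃ − x₀x₁)], [2(x₁x₃ − x₀x₂), 2(x₂x₃ + x₀x₁), x₀² − x₁² − x₂² + x₃²]], where |x|² = x₀² + x₁² + x₂² + x₃². Then the matrices ϑ(x⁽¹⁾), …, ϑ(x⁽ᵗ⁾) freely generate a free subgroup of rank t of the group of invertible 3×3 rational matrices if and only if x⁽¹⁾, …, x⁽ᵗ⁾ freely generate a free subgroup of rank t of the group of units of ℍ(ℚ). -/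
/-- The conjugation-rotation matrix `ϑ(x)` of a quaternion `x ∈ ℍ(ℚ)`:
it represents the `ℚ`-linear map `y ↦ x y x⁻¹` on purely imaginary
quaternions, identified with `ℚ³`. -/
noncomputable def quaternionRotation (x : Quaternion ℚ) : Matrix (Fin 3) (Fin 3) ℚ :=
  (1 / (x.re ^ 2 + x.imI ^ 2 + x.imJ ^ 2 + x.imK ^ 2)) •
    !![x.re ^ 2 + x.imI ^ 2 - x.imJ ^ 2 - x.imK ^ 2,
          2 * (x.imI * x.imJ - x.re * x.imK), 2 * (x.imI * x.imK + x.re * x.imJ);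
       2 * (x.imI * x.imJ + x.re * x.imK),
          x.re ^ 2 - x.imI ^ 2 + x.imJ ^ 2 - x.imK ^ 2,
          2 * (x.imJ * x.imK - x.re * x.imI);
       2 * (x.imI * x.imK - x.re * x.imJ), 2 * (x.imJ * x.imK + x.re * x.imI),
          x.re ^ 2 - x.imI ^ 2 - x.imJ ^ 2 + x.imK ^ 2]

/-- For nonzero `x`, the rotation matrix `ϑ(x)` has determinant `1`
(in particular it is invertible). -/
lemma quaternionRotation_det (x : Quaternion ℚ) (hx : x ≠ 0) :
    (quaternionRotation x).det = 1 := by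
  have hn : x.re ^ 2 + x.imI ^ 2 + x.imJ ^ 2 + x.imK ^ 2 ≠ 0 := by
    rw [← Quaternion.normSq_def']
    exact fun h => hx (Quaternion.normSq_eq_zero.mp h)
  unfold quaternionRotation
  rw [Matrix.det_smul, Matrix.det_fin_three]
  simp only [Matrix.cons_val', Matrix.cons_val_zero, Matrix.cons_val_one,
    Matrix.head_cons, Matrix.empty_val', Matrix.cons_val_fin_one,
    Matrix.head_fin_const, Matrix.cons_val_two, Matrix.tail_cons, Fintype.card_fin,
    Matrix.of_apply]
  field_simp
  ring

/-!
`ϑ(x)` is the matrix of `y ↦ x y x⁻¹` on pure quaternions, so `ϑ` is a homomorphism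
`ℍ(ℚ)ˣ → GL₃(ℚ)`, and a unit in its kernel commutes with every pure quaternion, hence is central.
The free-group map for the `ϑ(x⁽ⁱ⁾)` is `ϑ` composed with the one for the `x⁽ⁱ⁾`; a word killed
by the composite is sent into the centre, so it commutes with all generators, and a free group
of rank at least two has trivial centre.
-/

open Matrix

namespace FreeGroup

variable {α : Type*}

theorem toWord_of_mul [DecidableEq α] {a : α} {x : FreeGroup α}
    (h : ∀ b ∈ x.toWord.head?, b.1 ≠ a) : (of a * x).toWord = (a, true) :: x.toWord := by
  rw [toWord_mul, toWord_of, List.singleton_append]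
  refine IsReduced.reduce_eq ?_
  cases hx : x.toWord with
  | nil => exact IsReduced.singleton
  | cons b L =>
    rw [hx] at h
    exact isReduced_cons_cons.mpr
      ⟨fun hab => absurd hab.symm (h b rfl), hx ▸ isReduced_toWord⟩

theorem center_eq_bot [Nontrivial α] : Subgroup.center (FreeGroup α) = ⊥ := by
  classical
  refine (Subgroup.eq_bot_iff_forall _).mpr fun w hw => ?_
  by_contra hw1
  obtain ⟨c, L, hL⟩ := List.exists_cons_of_ne_nil (mt toWord_eq_nil_iff.mp hw1)
  obtain ⟨a, ha⟩ := exists_ne c.1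
  -- `of a * w` starts with the letter `a`, while `w * of a` keeps the first letter `c` of `w`.
  have hcomm : w * of a = of a * w := (Subgroup.mem_center_iff.mp hw (of a)).symm
  have hleft : (of a * w).toWord = (a, true) :: w.toWord :=
    toWord_of_mul (by simpa [hL] using ha.symm)
  have hright : (of a * w).toWord = w.toWord ++ [(a, true)] := by
    rw [← hcomm]
    refine (toWord_mul_sublist w (of a)).eq_of_length ?_
    rw [hcomm, hleft, toWord_of]
    simp
  have hhead := congrArg List.head? (hleft.symm.trans hright)
  simp only [hL, List.head?_cons, List.cons_append, Option.some.injEq] at hhead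
  exact ha (congrArg Prod.fst hhead)

end FreeGroup

theorem MonoidHom.injective_comp_iff_of_ker_le_center {F G H : Type*} [Group F] [Group G]
    [Group H] {φ : F →* G} {ψ : G →* H} (hψ : ψ.ker ≤ Subgroup.center G)
    (hF : Subgroup.center F = ⊥) : Function.Injective (ψ.comp φ) ↔ Function.Injective φ := by
  refine ⟨fun h => Function.Injective.of_comp (f := ψ) h, fun hφ => ?_⟩
  refine (injective_iff_map_eq_one _).mpr fun w hw => ?_
  have hcentral : ∀ g, g * w = w * g := fun g =>
    hφ <| by simp only [map_mul, Subgroup.mem_center_iff.mp (hψ hw)]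
  simpa [hF] using Subgroup.mem_center_iff.mpr hcentral

def pureQuaternion (v : Fin 3 → ℚ) : Quaternion ℚ := ⟨0, v 0, v 1, v 2⟩

theorem pureQuaternion_injective : Function.Injective pureQuaternion := by
  intro v w h
  ext i
  fin_cases i
  exacts [congrArg QuaternionAlgebra.imI h, congrArg QuaternionAlgebra.imJ h,
    congrArg QuaternionAlgebra.imK h]

-- Also true at `x = 0`, both sides being `0` (`1 / 0 = 0`, `0⁻¹ = 0`); so `ϑ` is
-- multiplicative on all of `ℍ(ℚ)`.
theorem pureQuaternion_mulVec (x : Quaternion ℚ) (v : Fin 3 → ℚ) :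
    pureQuaternion (quaternionRotation x *ᵥ v) = x * pureQuaternion v * x⁻¹ := by
  rw [Quaternion.inv_def, Quaternion.normSq_def']
  ext <;> simp only [Quaternion.re_mul, Quaternion.imI_mul, Quaternion.imJ_mul,
    Quaternion.imK_mul, Quaternion.re_smul, Quaternion.imI_smul, Quaternion.imJ_smul,
    Quaternion.imK_smul, Quaternion.re_star, Quaternion.imI_star, Quaternion.imJ_star,
    Quaternion.imK_star]
  all_goals simp only [pureQuaternion, quaternionRotation, mulVec, dotProduct,
    Fin.sum_univ_three, Matrix.smul_apply, of_apply, cons_val', cons_val_fin_one, cons_val_zero,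
    cons_val_one, cons_val, smul_eq_mul, one_div]
  all_goals ring

theorem quaternionRotation_one : quaternionRotation 1 = 1 :=
  ext_of_mulVec_single fun i => pureQuaternion_injective <| by
    rw [pureQuaternion_mulVec, one_mulVec, inv_one, one_mul, mul_one]

theorem quaternionRotation_mul (x y : Quaternion ℚ) :
    quaternionRotation (x * y) = quaternionRotation x * quaternionRotation y :=
  ext_of_mulVec_single fun i => pureQuaternion_injective <| by
    simp only [← mulVec_mulVec, pureQuaternion_mulVec, _root_.mul_inv_rev, mul_assoc]

noncomputable def quaternionRotationHom : Quaternion ℚ →* Matrix (Fin 3) (Fin 3) ℚ where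
  toFun := quaternionRotation
  map_one' := quaternionRotation_one
  map_mul' := quaternionRotation_mul

theorem commute_of_quaternionRotation_eq_one {x : Quaternion ℚ} (hx : x ≠ 0)
    (h : quaternionRotation x = 1) (y : Quaternion ℚ) : Commute x y := by
  have himag (v : Fin 3 → ℚ) : Commute x (pureQuaternion v) := by
    have := pureQuaternion_mulVec x v
    rwa [h, one_mulVec, eq_comm, mul_inv_eq_iff_eq_mul₀ hx] at this
  rw [← Quaternion.re_add_im y]
  exact (Quaternion.coe_commute _ x).symm.add_right (himag ![y.imI, y.imJ, y.imK])

theorem ker_units_map_quaternionRotationHom_le_center :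
    (Units.map quaternionRotationHom).ker ≤ Subgroup.center (Quaternion ℚ)ˣ := by
  intro u hu
  refine Subgroup.mem_center_iff.mpr fun v => Units.ext ?_
  exact (commute_of_quaternionRotation_eq_one u.ne_zero (congrArg Units.val hu) v).symm.eq

/-- For `t ≥ 2` and nonzero quaternions `x⁽¹⁾, …, x⁽ᵗ⁾ ∈ ℍ(ℚ)`,
the rotation matrices `ϑ(x⁽¹⁾), …, ϑ(x⁽ᵗ⁾)` freely generate a free subgroup of
rank `t` of the group of invertible 3×3 rational matrices iff
`x⁽¹⁾, …, x⁽ᵗ⁾` freely generate a free subgroup of rank `t` of the units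
of `ℍ(ℚ)`. -/
theorem rotations_free_iff_quaternions_free
    (t : ℕ) (ht : 2 ≤ t) (x : Fin t → Quaternion ℚ) (hx : ∀ i, x i ≠ 0) :
    Function.Injective
      (FreeGroup.lift (fun i : Fin t =>
        Matrix.GeneralLinearGroup.mkOfDetNeZero (quaternionRotation (x i))
          (by rw [quaternionRotation_det (x i) (hx i)]; norm_num))) ↔
    Function.Injective
      (FreeGroup.lift (fun i : Fin t => Units.mk0 (x i) (hx i))) := by
  have : Nontrivial (Fin t) := Fin.nontrivial_iff_two_le.mpr ht
  have hlift : FreeGroup.lift (fun i : Fin t =>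
        Matrix.GeneralLinearGroup.mkOfDetNeZero (quaternionRotation (x i))
          (by rw [quaternionRotation_det (x i) (hx i)]; norm_num)) =
      (Units.map quaternionRotationHom).comp
        (FreeGroup.lift fun i : Fin t => Units.mk0 (x i) (hx i)) :=
    FreeGroup.ext_hom _ _ fun i => Units.ext <| by simp [quaternionRotationHom]
  rw [hlift]
  exact MonoidHom.injective_comp_iff_of_ker_le_center
    ker_units_map_quaternionRotationHom_le_center FreeGroup.center_eq_bot
end
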